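/- arXiv:2201.00496 — 2 statements merged into one kernel-verified Lean document; each statement's English description precedes it below -/
import Mathlib

section
/- Fix two voters N = {1, 2}, a path-connected domain D and a strategy-proof rule f : D^2 → A. Let B ⊆ A with |B| ≥ 3 be such that the subgraph G_∼^B of the adjacency graph G_∼ induced on B is connected. Then: (i) if G_∼^B has no leaf (no vertex with exactly one neighbor in G_∼^B), then f behaves like a dictatorship on B; (ii) if G_∼^B has at least one leaf and f behaves like a dictatorship on {x, y} for every leaf x of G_∼^B and every edge (x, y) of G_∼^B, then f behaves like a dictatorship on B. -/
open Classical

set_option linter.unusedSectionVars false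
set_option linter.unusedVariables false

/-- A strict preference over `A`, represented as a ranking bijection:
`P k` is the `(k+1)`-th ranked alternative. -/
abbrev Pref (A : Type*) [Fintype A] := Fin (Fintype.card A) ≃ A

variable {A : Type*} [Fintype A] [DecidableEq A] [Nonempty A]

/-- `rk P k` : the `(k+1)`-th ranked alternative of `P` (0-indexed, so `rk P 0 = r₁(P)`). -/
noncomputable def rk (P : Pref A) (k : ℕ) : A :=
  if h : k < Fintype.card A then P ⟨k, h⟩ else Classical.arbitrary A

/-- The peak `r₁(P)`. -/
noncomputable def peak (P : Pref A) : A := rk P 0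

/-- The second-ranked alternative `r₂(P)`. -/
noncomputable def second (P : Pref A) : A := rk P 1

/-- `a` is strictly preferred to `b` under `P`. -/
def prefers (P : Pref A) (a b : A) : Prop := P.symm a < P.symm b

/-- Two preferences are completely reversed. -/
def Reversed (P P' : Pref A) : Prop := ∀ a b : A, prefers P a b ↔ prefers P' b a

/-- A profile lies in the domain `D`. -/
def InDom (D : Set (Pref A)) {n : ℕ} (P : Fin n → Pref A) : Prop := ∀ i, P i ∈ D

/-- Unanimity (an SCF satisfying it is called a rule). -/
def IsRule (D : Set (Pref A)) {n : ℕ} (f : (Fin n → Pref A) → A) : Prop :=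
  ∀ P : Fin n → Pref A, InDom D P → ∀ a : A, (∀ i, peak (P i) = a) → f P = a

/-- Strategy-proofness (relative to the domain `D`). -/
def StrategyProof (D : Set (Pref A)) {n : ℕ} (f : (Fin n → Pref A) → A) : Prop :=
  ∀ P : Fin n → Pref A, InDom D P → ∀ i : Fin n, ∀ Q ∈ D,
    f P = f (Function.update P i Q) ∨ prefers (P i) (f P) (f (Function.update P i Q))

/-- The tops-only property. -/
def TopsOnly (D : Set (Pref A)) {n : ℕ} (f : (Fin n → Pref A) → A) : Prop :=
  ∀ P P' : Fin n → Pref A, InDom D P → InDom D P' →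
    (∀ i, peak (P i) = peak (P' i)) → f P = f P'

/-- Anonymity. -/
def Anonymous (D : Set (Pref A)) {n : ℕ} (f : (Fin n → Pref A) → A) : Prop :=
  ∀ P : Fin n → Pref A, InDom D P → ∀ σ : Equiv.Perm (Fin n), f (P ∘ σ) = f P

/-- `f` behaves like a dictatorship on `B`. -/
def DictatorOn (D : Set (Pref A)) {n : ℕ} (f : (Fin n → Pref A) → A) (B : Set A) : Prop :=
  ∃ i : Fin n, ∀ P : Fin n → Pref A, InDom D P → (∀ j, peak (P j) ∈ B) → f P = peak (P i)

/-- `f` is a dictatorship. -/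
def Dictatorship (D : Set (Pref A)) {n : ℕ} (f : (Fin n → Pref A) → A) : Prop :=
  DictatorOn D f Set.univ

/-- A dictatorial domain. -/
def DictatorialDomain (D : Set (Pref A)) : Prop :=
  ∀ n : ℕ, 2 ≤ n → ∀ f : (Fin n → Pref A) → A,
    IsRule D f → StrategyProof D f → Dictatorship D f

/-- A tops-only domain. -/
def TopsOnlyDomain (D : Set (Pref A)) : Prop :=
  ∀ n : ℕ, 2 ≤ n → ∀ f : (Fin n → Pref A) → A,
    IsRule D f → StrategyProof D f → TopsOnly D f

/-- Adjacency of two alternatives relative to the domain `D`. -/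
def DomAdjacent (D : Set (Pref A)) (a b : A) : Prop :=
  ∃ P ∈ D, ∃ P' ∈ D, peak P = a ∧ second P = b ∧ peak P' = b ∧ second P' = a ∧
    ∀ k : ℕ, 2 ≤ k → rk P k = rk P' k

/-- The adjacency graph `G_∼` of the domain `D`. -/
noncomputable def adjGraph (D : Set (Pref A)) : SimpleGraph A :=
  SimpleGraph.fromRel (DomAdjacent D)

/-- Path-connectedness of the domain. -/
def PathConnectedDom (D : Set (Pref A)) : Prop := (adjGraph D).Connected

/-- Diversity: the domain contains two completely reversed preferences. -/
def Diversity (D : Set (Pref A)) : Prop := ∃ P ∈ D, ∃ P' ∈ D, Reversed P P'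

/-- `S(D^a)`: the set of alternatives second-ranked in some preference of `D` with peak `a`. -/
def secondsSet (D : Set (Pref A)) (a : A) : Set A := {b | ∃ P ∈ D, peak P = a ∧ second P = b}

/-- Leaf symmetry. -/
def LeafSymmetry (D : Set (Pref A)) : Prop :=
  ∀ x : A, (∃! y, (adjGraph D).Adj x y) →
    (∃ u ∈ secondsSet D x, ∃ v ∈ secondsSet D x, u ≠ v) →
    ∃ z ∈ secondsSet D x, ¬ (adjGraph D).Adj x z ∧ x ∈ secondsSet D z

/-- Unidimensionality: path-connectedness, diversity and leaf symmetry. -/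
def Unidimensional (D : Set (Pref A)) : Prop :=
  PathConnectedDom D ∧ Diversity D ∧ LeafSymmetry D

/-- The unique seconds property. -/
def UniqueSeconds (D : Set (Pref A)) : Prop := ∃ x b : A, secondsSet D x = {b}

/-- Minimal richness. -/
def MinimallyRich (D : Set (Pref A)) : Prop := ∀ a : A, ∃ P ∈ D, peak P = a

/-- The vertex set `⟨x, y|T⟩` of the (in a tree, unique) shortest path between `x` and `y`. -/
def intv (T : SimpleGraph A) (x y : A) : Set A :=
  {z | T.dist x z + T.dist z y = T.dist x y}

/-- `a'` is the projection of `a` onto `B` in `T`. -/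
def IsProjPt (T : SimpleGraph A) (B : Set A) (a a' : A) : Prop :=
  a' ∈ B ∧ ∀ b ∈ B, a' ∈ intv T a b

/-- The projection `Proj(a, B)` of `a` onto a path-closed set `B` in the tree `T`. -/
noncomputable def projOn (T : SimpleGraph A) (B : Set A) (a : A) : A :=
  if h : ∃ a', IsProjPt T B a a' then h.choose else a

/-- `Γ(P)`: the vertex set of the minimal subtree of `T` spanning all the peaks. -/
def gammaSet (T : SimpleGraph A) {n : ℕ} (P : Fin n → Pref A) : Set A :=
  {c | ∃ i j : Fin n, c ∈ intv T (peak (P i)) (peak (P j))}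

/-- The projection rule on `T` w.r.t. `xbar`. -/
noncomputable def projRule (T : SimpleGraph A) (xbar : A) {n : ℕ}
    (P : Fin n → Pref A) : A :=
  projOn T (gammaSet T P) xbar

/-- Single-peakedness on a tree. -/
def SinglePeaked (T : SimpleGraph A) (P : Pref A) : Prop :=
  ∀ c d : A, c ≠ d → c ∈ intv T (peak P) d → prefers P c d

/-- Semi-single-peakedness on `T` w.r.t. the threshold `xbar`. -/
def SemiSP (T : SimpleGraph A) (xbar : A) (P : Pref A) : Prop :=
  (∀ c d : A, c ∈ intv T (peak P) xbar → d ∈ intv T (peak P) xbar → c ≠ d →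
    c ∈ intv T (peak P) d → prefers P c d) ∧
  (∀ c : A, c ∉ intv T (peak P) xbar →
    prefers P (projOn T (intv T (peak P) xbar) c) c)

/-- A semi-single-peaked domain. -/
def SemiSPDomain (D : Set (Pref A)) : Prop :=
  ∃ (T : SimpleGraph A) (xbar : A), T.IsTree ∧
    D ⊆ {P | SemiSP T xbar P} ∧ (adjGraph D).Connected

/-- `A^{a⇀b}`: the alternatives whose path to `b` goes through `a`. -/
def sideSet (T : SimpleGraph A) (a b : A) : Set A := {z | a ∈ intv T z b}

/-- `x = max^P(B)`: `x` is `P`'s best alternative of `B`. -/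
def IsBestOf (P : Pref A) (x : A) (B : Set A) : Prop :=
  x ∈ B ∧ ∀ y ∈ B, y ≠ x → prefers P x y

/-- `a` and `b` are dual-thresholds in the tree `T`. -/
def DualThresholds (T : SimpleGraph A) (a b : A) : Prop :=
  a ≠ b ∧ ∀ c : A, c ∉ intv T a b →
    projOn T (intv T a b) c = a ∨ projOn T (intv T a b) c = b

/-- An `(a,b)`-semi-hybrid preference on `T`. -/
def SemiHybridPref (T : SimpleGraph A) (a b : A) (P : Pref A) : Prop :=
  (peak P ∈ sideSet T a b \ {a} → SemiSP T a P ∧ IsBestOf P b (sideSet T b a)) ∧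
  (peak P ∈ sideSet T b a \ {b} → SemiSP T b P ∧ IsBestOf P a (sideSet T a b)) ∧
  (peak P ∈ intv T a b → IsBestOf P a (sideSet T a b) ∧ IsBestOf P b (sideSet T b a))

/-- `x` is a leaf of the subgraph of `G` induced on `B`. -/
def IsLeafOn (G : SimpleGraph A) (B : Set A) (x : A) : Prop :=
  x ∈ B ∧ ∃! y, y ∈ B ∧ G.Adj x y

/-- `D` is an `(a,b)`-semi-hybrid domain on the tree `T`. -/
def SemiHybridDomainOn (D : Set (Pref A)) (T : SimpleGraph A) (a b : A) : Prop :=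
  T.IsTree ∧ DualThresholds T a b ∧ D ⊆ {P | SemiHybridPref T a b P} ∧
  (adjGraph D).Connected ∧
  (¬ ∃ (T' : SimpleGraph A) (a' b' : A), T'.IsTree ∧ DualThresholds T' a' b' ∧
      D ⊆ {P | SemiHybridPref T' a' b' P} ∧ intv T' a' b' ⊂ intv T a b) ∧
  ((adjGraph D).IsTree →
    ∀ x : A, IsLeafOn (adjGraph D) (intv T a b) x →
      ∃ P ∈ D, ¬ SemiSP (adjGraph D) x P)

/-- `D` is a semi-hybrid domain. -/
def SemiHybridDomain (D : Set (Pref A)) : Prop :=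
  ∃ (T : SimpleGraph A) (a b : A), SemiHybridDomainOn D T a b

/-- An `(a,b)`-hybrid preference on `T`. -/
def HybridPref (T : SimpleGraph A) (a b : A) (P : Pref A) : Prop :=
  (∀ y z : A, ((y ∈ sideSet T a b ∧ z ∈ sideSet T a b) ∨
      (y ∈ sideSet T b a ∧ z ∈ sideSet T b a)) → y ≠ z →
    y ∈ intv T (peak P) z → prefers P y z) ∧
  (peak P ∈ sideSet T a b \ {a} → IsBestOf P a (intv T a b)) ∧
  (peak P ∈ sideSet T b a \ {b} → IsBestOf P b (intv T a b))

/-- `D` is an `(a,b)`-hybrid domain on the tree `T`. -/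
def HybridDomainOn (D : Set (Pref A)) (T : SimpleGraph A) (a b : A) : Prop :=
  T.IsTree ∧ DualThresholds T a b ∧ D ⊆ {P | HybridPref T a b P} ∧
  (adjGraph D).Connected ∧
  (¬ ∃ (T' : SimpleGraph A) (a' b' : A), T'.IsTree ∧ DualThresholds T' a' b' ∧
      D ⊆ {P | HybridPref T' a' b' P} ∧ intv T' a' b' ⊂ intv T a b) ∧
  3 ≤ (intv T a b).ncard

/-- `f` is an `(a,b)`-hybrid rule on the tree `T`. -/
def IsHybridRule (D : Set (Pref A)) {n : ℕ} (f : (Fin n → Pref A) → A)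
    (T : SimpleGraph A) (a b : A) : Prop :=
  T.IsTree ∧ DualThresholds T a b ∧ 3 ≤ (intv T a b).ncard ∧
  ∃ i : Fin n, ∀ P : Fin n → Pref A, InDom D P →
    (peak (P i) ∈ intv T a b → f P = peak (P i)) ∧
    (peak (P i) ∈ sideSet T a b \ {a} → f P = projOn T (gammaSet T P) a) ∧
    (peak (P i) ∈ sideSet T b a \ {b} → f P = projOn T (gammaSet T P) b)

/-- The PNT rule on `T` w.r.t. the edge `(x, y)`, with the two distinguished voters `i, j`. -/
noncomputable def pntRule (T : SimpleGraph A) (x y : A) {n : ℕ} (i j : Fin n)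
    (P : Fin n → Pref A) : A :=
  if peak (P i) ∈ sideSet T y x then peak (P i)
  else if peak (P j) ∈ sideSet T x y then projOn T (gammaSet T P) x
  else if prefers (P j) x y then x else y

/-- `(x, y)` is a critical spot in `T` for the domain `D`. -/
def CriticalSpot (D : Set (Pref A)) (T : SimpleGraph A) (x y : A) : Prop :=
  T.Adj x y ∧
  (∀ P ∈ D, peak P ∈ sideSet T x y → SemiSP T y P) ∧
  (∀ P ∈ D, peak P ∈ sideSet T y x → IsBestOf P x (sideSet T x y)) ∧
  (∃ P ∈ D, ∃ P' ∈ D, peak P = peak P' ∧ peak P ∈ sideSet T y x ∧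
    prefers P y x ∧ prefers P' x y)

/-- `x` is a path in the graph `G` (pairwise distinct, consecutive vertices adjacent). -/
def IsPathIn (G : SimpleGraph A) {v : ℕ} (x : Fin v → A) : Prop :=
  Function.Injective x ∧
  ∀ (k : ℕ) (h : k + 1 < v), G.Adj (x ⟨k, Nat.lt_of_succ_lt h⟩) (x ⟨k + 1, h⟩)

/-- `x` is a cycle in the graph `G`. -/
def IsCycleIn (G : SimpleGraph A) {v : ℕ} (x : Fin v → A) : Prop :=
  Function.Injective x ∧
  (∀ (k : ℕ) (h : k + 1 < v), G.Adj (x ⟨k, Nat.lt_of_succ_lt h⟩) (x ⟨k + 1, h⟩)) ∧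
  ∀ (h : 0 < v), G.Adj (x ⟨v - 1, Nat.sub_lt h Nat.one_pos⟩) (x ⟨0, h⟩)

/-- The line `L^A` induced by the ranking of the preference `P`. -/
noncomputable def lineOf (P : Pref A) : SimpleGraph A :=
  SimpleGraph.fromRel (fun a b =>
    ∃ k : ℕ, k + 1 < Fintype.card A ∧ rk P k = a ∧ rk P (k + 1) = b)

/-- The median of three natural numbers. -/
def med3 (a b c : ℕ) : ℕ := max (min a b) (min (max a b) c)

/-- The two-voter profile in which voter `i` reports `Pi` and the other voter reports `Q`. -/
noncomputable def prof2 (i : Fin 2) (Pi Q : Pref A) : Fin 2 → Pref A :=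
  Function.update (fun _ => Q) i Pi

/-!
Look at the two-voter profiles built from an adjacency witness of an edge `xy`, i.e. `P = x y …`
and `P' = y x …` with equal tails. Strategy-proofness forces the outcome there to be `x` or `y`,
independently of the witness, and a win of voter 1 on the ordered edge `(x, y)` propagates to
every edge `(y, z)` with `z ≠ x`. Call `(x, y)` dominated if `x` is chosen whichever voter holds
it; domination propagates the same way. If no vertex of `B` is a leaf, a dominated edge therefore
yields a cycle of dominated edges, and walking back around the cycle inside voter 1's option set
contradicts domination; at a leaf, domination contradicts the dictatorship on the leaf edge.
Without dominated edges one voter wins every edge of the connected graph `G_∼^B`, so that voter's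
option set at any column contains all of `B`, and the voter gets their peak.
-/

section Ranking

variable {P : Pref A}

lemma rk_val_symm (a : A) : rk P (P.symm a) = a := by
  rw [rk, dif_pos (P.symm a).isLt, Fin.eta, Equiv.apply_symm_apply]

lemma val_symm_rk {k : ℕ} (hk : k < Fintype.card A) : (P.symm (rk P k) : ℕ) = k := by
  rw [rk, dif_pos hk, Equiv.symm_apply_apply]

lemma val_symm_peak : (P.symm (peak P) : ℕ) = 0 := val_symm_rk Fintype.card_pos

lemma eq_of_val_symm_eq {a b : A} (h : (P.symm a : ℕ) = P.symm b) : a = b :=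
  P.symm.injective (Fin.ext h)

lemma not_prefers_peak (a : A) : ¬ prefers P a (peak P) := by
  simp [prefers, Fin.lt_def, val_symm_peak]

end Ranking

structure AdjWitness (D : Set (Pref A)) (x y : A) (P P' : Pref A) : Prop where
  mem_fst : P ∈ D
  mem_snd : P' ∈ D
  peak_fst : peak P = x
  second_fst : second P = y
  peak_snd : peak P' = y
  second_snd : second P' = x
  tail : ∀ k : ℕ, 2 ≤ k → rk P k = rk P' k
  ne : x ≠ y

variable {D : Set (Pref A)}

lemma exists_adjWitness {x y : A} (h : (adjGraph D).Adj x y) : ∃ P P', AdjWitness D x y P P' := by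
  rw [adjGraph, SimpleGraph.fromRel_adj] at h
  obtain ⟨hne, ⟨P, hP, P', hP', h₁, h₂, h₃, h₄, h₅⟩ | ⟨P, hP, P', hP', h₁, h₂, h₃, h₄, h₅⟩⟩ := h
  · exact ⟨P, P', hP, hP', h₁, h₂, h₃, h₄, h₅, hne⟩
  · exact ⟨P', P, hP', hP, h₃, h₄, h₁, h₂, fun k hk => (h₅ k hk).symm, hne⟩

namespace AdjWitness

variable {x y : A} {P P' : Pref A}

lemma symm (hw : AdjWitness D x y P P') : AdjWitness D y x P' P :=
  ⟨hw.mem_snd, hw.mem_fst, hw.peak_snd, hw.second_snd, hw.peak_fst, hw.second_fst,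
    fun k hk => (hw.tail k hk).symm, hw.ne.symm⟩

lemma one_lt_card (hw : AdjWitness D x y P P') : 1 < Fintype.card A := by
  by_contra! h
  exact hw.ne ((Fintype.card_le_one_iff_subsingleton.mp h).elim x y)

lemma val_symm_second_fst (hw : AdjWitness D x y P P') : (P.symm y : ℕ) = 1 :=
  hw.second_fst ▸ val_symm_rk hw.one_lt_card

lemma val_symm_peak_fst (hw : AdjWitness D x y P P') : (P.symm x : ℕ) = 0 :=
  hw.peak_fst ▸ val_symm_peak

lemma val_symm_of_ne (hw : AdjWitness D x y P P') {z : A} (hzx : z ≠ x) (hzy : z ≠ y) :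
    (P'.symm z : ℕ) = P.symm z ∧ 2 ≤ (P.symm z : ℕ) := by
  have h0 : (P.symm z : ℕ) ≠ 0 := fun h =>
    hzx (eq_of_val_symm_eq (h.trans hw.val_symm_peak_fst.symm))
  have h1 : (P.symm z : ℕ) ≠ 1 := fun h =>
    hzy (eq_of_val_symm_eq (h.trans hw.val_symm_second_fst.symm))
  have h2 : 2 ≤ (P.symm z : ℕ) := by omega
  have hz : rk P' (P.symm z) = z := (hw.tail _ h2).symm.trans (rk_val_symm z)
  have h := val_symm_rk (P := P') (P.symm z).isLt
  rw [hz] at h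
  exact ⟨h, h2⟩

lemma eq_of_prefers_of_prefers (hw : AdjWitness D x y P P') {u v : A}
    (h : prefers P u v) (h' : prefers P' v u) : u = x ∧ v = y := by
  rw [prefers, Fin.lt_def] at h h'
  have px := hw.val_symm_peak_fst
  have py := hw.val_symm_second_fst
  have qy := hw.symm.val_symm_peak_fst
  have qx := hw.symm.val_symm_second_fst
  rcases eq_or_ne u x with rfl | hux
  · rcases eq_or_ne v y with rfl | hvy
    · exact ⟨rfl, rfl⟩
    rcases eq_or_ne v u with rfl | hvu
    · omega
    have := hw.val_symm_of_ne hvu hvy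
    omega
  exfalso
  rcases eq_or_ne u y with rfl | huy
  · omega
  have := hw.val_symm_of_ne hux huy
  rcases eq_or_ne v x with rfl | hvx
  · omega
  rcases eq_or_ne v y with rfl | hvy
  · omega
  have := hw.val_symm_of_ne hvx hvy
  omega

end AdjWitness

lemma exists_rel_reflTransGen_of_serial {α : Type*} [Finite α] {r : α → α → Prop}
    (hr : ∀ a b, r a b → ∃ c, r b c) {a b : α} (hab : r a b) :
    ∃ c d, r c d ∧ Relation.ReflTransGen r d c := by
  by_contra! hno
  have : IsTrans α (flip (Relation.TransGen r)) := ⟨fun _ _ _ h₁ h₂ => h₂.trans h₁⟩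
  have : Std.Irrefl (flip (Relation.TransGen r)) := ⟨fun c h => by
    obtain ⟨d, hcd, hdc⟩ := Relation.TransGen.head'_iff.mp h
    exact hno c d hcd hdc⟩
  obtain ⟨m, ⟨_, hm⟩, hmin⟩ := (Finite.wellFounded_of_trans_of_irrefl
    (flip (Relation.TransGen r))).has_min {x | ∃ y, r y x} ⟨b, a, hab⟩
  obtain ⟨c, hmc⟩ := hr _ _ hm
  exact hmin c ⟨m, hmc⟩ (.single hmc)

namespace SimpleGraph

variable {V : Type*} {G : SimpleGraph V} {B : Set V}

lemma Connected.induce_induction (hc : (G.induce B).Connected) {p : V → Prop}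
    (hp : ∀ a ∈ B, ∀ b ∈ B, G.Adj a b → p a → p b) {a b : V} (ha : a ∈ B) (hb : b ∈ B)
    (hpa : p a) : p b := by
  suffices ∀ c : B, Relation.ReflTransGen (G.induce B).Adj ⟨a, ha⟩ c → p c from
    this ⟨b, hb⟩ ((reachable_iff_reflTransGen _ _).mp (hc.preconnected _ _))
  intro c h
  induction h with
  | refl => exact hpa
  | tail _ hcd ih => exact hp _ (Subtype.prop _) _ (Subtype.prop _) hcd ih

lemma Connected.exists_adj_of_one_lt_ncard (hc : (G.induce B).Connected) (hB : 1 < B.ncard) :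
    ∃ x ∈ B, ∃ y ∈ B, G.Adj x y := by
  obtain ⟨a, b, ha, hb, hab⟩ := (Set.one_lt_ncard_iff (Set.finite_of_ncard_pos (by omega))).mp hB
  by_contra! h
  exact hab (hc.induce_induction (p := (a = ·)) (fun x hx y hy hxy _ => absurd hxy (h x hx y hy))
    ha hb rfl)

end SimpleGraph

lemma exists_adj_ne_of_not_isLeafOn {G : SimpleGraph A} {B : Set A} {u v : A}
    (h : ¬ IsLeafOn G B v) (hv : v ∈ B) (hu : u ∈ B) (hvu : G.Adj v u) :
    ∃ z ∈ B, G.Adj v z ∧ z ≠ u := by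
  by_contra! hne
  exact h ⟨hv, u, ⟨hu, hvu⟩, fun z hz => hne z hz.1 hz.2⟩

/-- `F Q R` is the outcome when voter 1 reports `Q` and voter 2 reports `R`. -/
structure TwoVoterSP (D : Set (Pref A)) (F : Pref A → Pref A → A) : Prop where
  sp_fst : ∀ Q ∈ D, ∀ Q' ∈ D, ∀ R ∈ D, F Q R = F Q' R ∨ prefers Q (F Q R) (F Q' R)
  sp_snd : ∀ Q ∈ D, ∀ R ∈ D, ∀ R' ∈ D, F Q R = F Q R' ∨ prefers R (F Q R) (F Q R')
  unanimous : ∀ Q ∈ D, ∀ R ∈ D, peak Q = peak R → F Q R = peak Q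

namespace TwoVoterSP

variable {F : Pref A → Pref A → A} (hF : TwoVoterSP D F)
include hF

lemma swap : TwoVoterSP D (Function.swap F) where
  sp_fst Q hQ Q' hQ' R hR := hF.sp_snd R hR Q hQ Q' hQ'
  sp_snd Q hQ R hR R' hR' := hF.sp_fst R hR R' hR' Q hQ
  unanimous Q hQ R hR h := (hF.unanimous R hR Q hQ h.symm).trans h.symm

/-- `(F · R) '' D` is voter 1's option set against `R`. -/
lemma eq_peak_of_mem {Q R : Pref A} (hQ : Q ∈ D) (hR : R ∈ D) (h : peak Q ∈ (F · R) '' D) :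
    F Q R = peak Q := by
  obtain ⟨Q', hQ', hQ'R : F Q' R = peak Q⟩ := h
  rcases hF.sp_fst Q hQ Q' hQ' R hR with h | h
  · exact h.trans hQ'R
  · exact absurd (hQ'R ▸ h) (not_prefers_peak _)

lemma apply_eq_or_eq_of_mem {x y : A} {P P' R : Pref A} (hw : AdjWitness D x y P P')
    (hR : R ∈ D) (h : y ∈ (F · R) '' D) : F P R = x ∨ F P R = y := by
  obtain ⟨Q, hQ, hQR : F Q R = y⟩ := h
  rcases hF.sp_fst P hw.mem_fst Q hQ R hR with h | h
  · exact .inr (h.trans hQR)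
  rw [hQR, prefers, Fin.lt_def, hw.val_symm_second_fst] at h
  exact .inl (eq_of_val_symm_eq (P := P) (by rw [hw.val_symm_peak_fst]; omega))

lemma apply_fst_eq_or {x y : A} {P P' R : Pref A} (hw : AdjWitness D x y P P') (hR : R ∈ D) :
    F P R = F P' R ∨ F P R = x ∧ F P' R = y := by
  rcases hF.sp_fst P hw.mem_fst P' hw.mem_snd R hR with h | h
  · exact .inl h
  rcases hF.sp_fst P' hw.mem_snd P hw.mem_fst R hR with h' | h'
  · exact .inl h'.symm
  exact .inr (hw.eq_of_prefers_of_prefers h h')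

end TwoVoterSP

def FirstWins (D : Set (Pref A)) (F : Pref A → Pref A → A) (x y : A) : Prop :=
  ∀ P P', AdjWitness D x y P P' → F P P' = x

def Dominates (D : Set (Pref A)) (F : Pref A → Pref A → A) (x y : A) : Prop :=
  FirstWins D F x y ∧ FirstWins D (Function.swap F) x y

def FirstDecides (D : Set (Pref A)) (F : Pref A → Pref A → A) (x y : A) : Prop :=
  FirstWins D F x y ∧ FirstWins D F y x

lemma dominates_swap_iff {F : Pref A → Pref A → A} {x y : A} :
    Dominates D (Function.swap F) x y ↔ Dominates D F x y :=
  and_comm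

namespace TwoVoterSP

variable {F : Pref A → Pref A → A} (hF : TwoVoterSP D F)
include hF

lemma apply_witness_eq_or {x y : A} {P P' : Pref A} (hw : AdjWitness D x y P P') :
    F P P' = x ∨ F P P' = y :=
  hF.apply_eq_or_eq_of_mem hw hw.mem_snd
    ⟨P', hw.mem_snd, (hF.unanimous P' hw.mem_snd P' hw.mem_snd rfl).trans hw.peak_snd⟩

lemma firstWins_of_witness {x y : A} {P P' : Pref A} (hw : AdjWitness D x y P P')
    (h : F P P' = x) : FirstWins D F x y := by
  intro Q Q' hv
  have hx : F Q P' = peak Q :=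
    hF.eq_peak_of_mem hv.mem_fst hw.mem_snd ⟨P, hw.mem_fst, h.trans hv.peak_fst.symm⟩
  refine (hF.apply_witness_eq_or hv).resolve_right fun hy => hw.ne ?_
  have hy' : F Q P' = peak P' :=
    hF.swap.eq_peak_of_mem hw.mem_snd hv.mem_fst ⟨Q', hv.mem_snd, hy.trans hw.peak_snd.symm⟩
  rw [← hv.peak_fst, ← hw.peak_snd, ← hx, hy']

lemma firstWins_or_firstWins_swap {x y : A} (hxy : (adjGraph D).Adj x y) :
    FirstWins D F x y ∨ FirstWins D (Function.swap F) y x := by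
  obtain ⟨P, P', hw⟩ := exists_adjWitness hxy
  exact (hF.apply_witness_eq_or hw).imp (hF.firstWins_of_witness hw)
    (hF.swap.firstWins_of_witness hw.symm)

lemma mem_image_of_firstWins {x y : A} {R : Pref A} (hxy : FirstWins D F x y)
    (hadj : (adjGraph D).Adj x y) (hR : R ∈ D) (hy : y ∈ (F · R) '' D) : x ∈ (F · R) '' D := by
  obtain ⟨P, P', hw⟩ := exists_adjWitness hadj
  refine (hF.apply_eq_or_eq_of_mem hw hR hy).elim (⟨P, hw.mem_fst, ·⟩) fun h => absurd ?_ hw.ne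
  have hy' : F P P' = peak P' :=
    hF.swap.eq_peak_of_mem hw.mem_snd hw.mem_fst ⟨R, hR, h.trans hw.peak_snd.symm⟩
  rw [← hxy P P' hw, hy', hw.peak_snd]

lemma firstWins_next {x y z : A} (hxy : FirstWins D F x y) (hadj : (adjGraph D).Adj x y)
    (hadj' : (adjGraph D).Adj y z) (hzx : z ≠ x) : FirstWins D F y z := by
  obtain ⟨P, P', hw⟩ := exists_adjWitness hadj
  obtain ⟨Q, Q', hv⟩ := exists_adjWitness hadj'
  have hP'Q : F P' Q = y :=
    (hF.unanimous P' hw.mem_snd Q hv.mem_fst (hw.peak_snd.trans hv.peak_fst.symm)).trans hw.peak_snd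
  have hPQ : F P Q = x := by
    refine (hF.apply_eq_or_eq_of_mem hw hv.mem_fst ⟨P', hw.mem_snd, hP'Q⟩).resolve_right
      fun h => hw.ne ?_
    have hy : F P P' = peak P' :=
      hF.swap.eq_peak_of_mem hw.mem_snd hw.mem_fst ⟨Q, hv.mem_fst, h.trans hw.peak_snd.symm⟩
    rw [← hxy P P' hw, hy, hw.peak_snd]
  have hPQ' : F P Q' = x := by
    rcases hF.swap.apply_fst_eq_or hv hw.mem_fst with h | h
    · exact h.symm.trans hPQ
    · exact absurd (hPQ.symm.trans h.1) hw.ne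
  have hP'Q' : F P' Q' = y := by
    have hxy' : F P' Q' = x ∨ F P' Q' = y :=
      (hF.apply_fst_eq_or hw hv.mem_snd).imp (fun h => h.symm.trans hPQ') And.right
    have hyz : F P' Q' = y ∨ F P' Q' = z :=
      (hF.swap.apply_fst_eq_or hv hw.mem_snd).imp (fun h => h.symm.trans hP'Q) And.right
    exact hyz.elim id fun h => hxy'.resolve_left fun hx => hzx (h.symm.trans hx)
  have hQQ' : F Q Q' = y := hv.peak_fst ▸
    hF.eq_peak_of_mem hv.mem_fst hv.mem_snd ⟨P', hw.mem_snd, hP'Q'.trans hv.peak_fst.symm⟩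
  exact hF.firstWins_of_witness hv hQQ'

lemma dominates_next {x y z : A} (hxy : Dominates D F x y) (hadj : (adjGraph D).Adj x y)
    (hadj' : (adjGraph D).Adj y z) (hzx : z ≠ x) : Dominates D F y z :=
  ⟨hF.firstWins_next hxy.1 hadj hadj' hzx, hF.swap.firstWins_next hxy.2 hadj hadj' hzx⟩

/-- For a witness `P, P'` of `(x, y)`, voter 1's option set against `P` contains `x`, hence,
backwards around the cycle, `y = peak P'`; yet domination gives `F P' P = x`. -/
lemma not_dominates_cycle {x y : A}
    (hxy : (adjGraph D).Adj x y ∧ Dominates D F x y)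
    (hyx : Relation.ReflTransGen (fun a b => (adjGraph D).Adj a b ∧ Dominates D F a b) y x) :
    False := by
  obtain ⟨P, P', hw⟩ := exists_adjWitness hxy.1
  have hx : x ∈ (F · P) '' D :=
    ⟨P, hw.mem_fst, (hF.unanimous P hw.mem_fst P hw.mem_fst rfl).trans hw.peak_fst⟩
  have hmem : ∀ c, Relation.ReflTransGen (fun a b => (adjGraph D).Adj a b ∧ Dominates D F a b)
      c x → c ∈ (F · P) '' D := fun c hc => by
    induction hc using Relation.ReflTransGen.head_induction_on with
    | refl => exact hx
    | head hab _ ih => exact hF.mem_image_of_firstWins hab.2.1 hab.1 hw.mem_fst ih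
  have hP'P : F P' P = peak P' :=
    hF.eq_peak_of_mem hw.mem_snd hw.mem_fst (hw.peak_snd.symm ▸ hmem y hyx)
  exact hw.ne ((hxy.2.2 P P' hw).symm.trans (hP'P.trans hw.peak_snd))

lemma not_dominates_of_forall_exists {B : Set A}
    (hext : ∀ u ∈ B, ∀ v ∈ B, (adjGraph D).Adj u v → Dominates D F u v →
      ∃ z ∈ B, (adjGraph D).Adj v z ∧ z ≠ u)
    {u v : A} (hu : u ∈ B) (hv : v ∈ B) (huv : (adjGraph D).Adj u v) : ¬ Dominates D F u v := by
  intro hdom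
  let r : A → A → Prop := fun a b => a ∈ B ∧ b ∈ B ∧ (adjGraph D).Adj a b ∧ Dominates D F a b
  have hr : ∀ a b, r a b → ∃ c, r b c := fun a b ⟨ha, hb, hab, hd⟩ =>
    let ⟨c, hc, hbc, hca⟩ := hext a ha b hb hab hd
    ⟨c, hb, hc, hbc, hF.dominates_next hd hab hbc hca⟩
  obtain ⟨a, b, hab, hba⟩ := exists_rel_reflTransGen_of_serial hr ⟨hu, hv, huv, hdom⟩
  exact hF.not_dominates_cycle hab.2.2 (Relation.ReflTransGen.mono (fun _ _ h => h.2.2) _ _ hba)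

lemma firstWins_symm_of_not_dominates {x y : A} (hadj : (adjGraph D).Adj x y)
    (hnd : ¬ Dominates D F x y) (h : FirstWins D F x y) : FirstWins D F y x :=
  (hF.firstWins_or_firstWins_swap hadj.symm).resolve_right fun h' => hnd ⟨h, h'⟩

lemma firstDecides_next {x y z : A} (h : FirstDecides D F x y) (hadj : (adjGraph D).Adj x y)
    (hadj' : (adjGraph D).Adj y z) (hnd : ¬ Dominates D F y z) : FirstDecides D F y z := by
  rcases eq_or_ne z x with rfl | hzx
  · exact ⟨h.2, h.1⟩
  have hyz := hF.firstWins_next h.1 hadj hadj' hzx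
  exact ⟨hyz, hF.firstWins_symm_of_not_dominates hadj' hnd hyz⟩

section Connected

variable {B : Set A} (hc : ((adjGraph D).induce B).Connected)
  (hnd : ∀ u ∈ B, ∀ v ∈ B, (adjGraph D).Adj u v → ¬ Dominates D F u v)
include hc hnd

lemma firstDecides_of_connected {x y : A} (hy : y ∈ B) (hxy : (adjGraph D).Adj x y)
    (h : FirstDecides D F x y) {u v : A} (hu : u ∈ B) (hv : v ∈ B)
    (huv : (adjGraph D).Adj u v) : FirstDecides D F u v := by
  refine hc.induce_induction (p := fun a => ∀ c ∈ B, (adjGraph D).Adj a c → FirstDecides D F a c)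
    ?_ hy hu ?_ v hv huv
  · exact fun a _ b hb hab ha c hc hbc =>
      hF.firstDecides_next (ha b hb hab) hab hbc (hnd b hb c hc hbc)
  · exact fun c hc hyc => hF.firstDecides_next h hxy hyc (hnd y hy c hc hyc)

omit hnd in
lemma eq_peak_of_forall_firstDecides
    (h : ∀ u ∈ B, ∀ v ∈ B, (adjGraph D).Adj u v → FirstDecides D F u v)
    {Q R : Pref A} (hQ : Q ∈ D) (hR : R ∈ D) (hQB : peak Q ∈ B) (hRB : peak R ∈ B) :
    F Q R = peak Q :=
  hF.eq_peak_of_mem hQ hR <| hc.induce_induction (p := (· ∈ (F · R) '' D))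
    (fun a ha b hb hab hmem => hF.mem_image_of_firstWins (h a ha b hb hab).2 hab.symm hR hmem)
    hRB hQB ⟨R, hR, hF.unanimous R hR R hR rfl⟩

lemma eq_peak_of_firstWins {x y : A} (hx : x ∈ B) (hy : y ∈ B) (hxy : (adjGraph D).Adj x y)
    (h : FirstWins D F x y) {Q R : Pref A} (hQ : Q ∈ D) (hR : R ∈ D) (hQB : peak Q ∈ B)
    (hRB : peak R ∈ B) : F Q R = peak Q :=
  hF.eq_peak_of_forall_firstDecides hc (fun _ hu _ hv huv => hF.firstDecides_of_connected hc hnd hy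
    hxy ⟨h, hF.firstWins_symm_of_not_dominates hxy (hnd x hx y hy hxy) h⟩ hu hv huv) hQ hR hQB hRB

end Connected

end TwoVoterSP

def pairRule (f : (Fin 2 → Pref A) → A) (Q R : Pref A) : A := f ![Q, R]

variable {f : (Fin 2 → Pref A) → A}

lemma pairRule_apply (P : Fin 2 → Pref A) : pairRule f (P 0) (P 1) = f P := by
  rw [pairRule]
  congr
  ext i
  fin_cases i <;> rfl

lemma inDom_pair {Q R : Pref A} (hQ : Q ∈ D) (hR : R ∈ D) : InDom D ![Q, R] :=
  Fin.forall_fin_two.mpr ⟨hQ, hR⟩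

lemma twoVoterSP_pairRule (hrule : IsRule D f) (hsp : StrategyProof D f) :
    TwoVoterSP D (pairRule f) where
  sp_fst Q hQ Q' hQ' R hR := by
    have h := hsp ![Q, R] (inDom_pair hQ hR) 0 Q' hQ'
    rwa [show Function.update ![Q, R] 0 Q' = ![Q', R] by ext i; fin_cases i <;> rfl] at h
  sp_snd Q hQ R hR R' hR' := by
    have h := hsp ![Q, R] (inDom_pair hQ hR) 1 R' hR'
    rwa [show Function.update ![Q, R] 1 R' = ![Q, R'] by ext i; fin_cases i <;> rfl] at h
  unanimous Q hQ R hR h :=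
    hrule ![Q, R] (inDom_pair hQ hR) _ (Fin.forall_fin_two.mpr ⟨rfl, h.symm⟩)

lemma not_dominates_of_dictatorOn_pair {x y : A} (hd : DictatorOn D f {x, y})
    (hadj : (adjGraph D).Adj x y) : ¬ Dominates D (pairRule f) x y := by
  rintro ⟨h, h'⟩
  obtain ⟨P, P', hw⟩ := exists_adjWitness hadj
  obtain ⟨i, hi⟩ := hd
  have hpeaks : ∀ j, peak (![P, P'] j) ∈ ({x, y} : Set A) ∧ peak (![P', P] j) ∈ ({x, y} : Set A) :=
    Fin.forall_fin_two.mpr ⟨by simp [hw.peak_fst, hw.peak_snd], by simp [hw.peak_fst, hw.peak_snd]⟩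
  fin_cases i
  · have := hi ![P', P] (inDom_pair hw.mem_snd hw.mem_fst) fun j => (hpeaks j).2
    exact hw.ne ((h' P P' hw).symm.trans (this.trans hw.peak_snd))
  · have := hi ![P, P'] (inDom_pair hw.mem_fst hw.mem_snd) fun j => (hpeaks j).1
    exact hw.ne ((h P P' hw).symm.trans (this.trans hw.peak_snd))

lemma dictatorOn_of_forall_dominates_exists (hrule : IsRule D f) (hsp : StrategyProof D f)
    {B : Set A} (hB : 1 < B.ncard) (hc : ((adjGraph D).induce B).Connected)
    (hext : ∀ u ∈ B, ∀ v ∈ B, (adjGraph D).Adj u v → Dominates D (pairRule f) u v →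
      ∃ z ∈ B, (adjGraph D).Adj v z ∧ z ≠ u) :
    DictatorOn D f B := by
  have hF := twoVoterSP_pairRule hrule hsp
  have hnd : ∀ u ∈ B, ∀ v ∈ B, (adjGraph D).Adj u v → ¬ Dominates D (pairRule f) u v :=
    fun _ hu _ hv huv => hF.not_dominates_of_forall_exists hext hu hv huv
  obtain ⟨x, hx, y, hy, hxy⟩ := hc.exists_adj_of_one_lt_ncard hB
  rcases hF.firstWins_or_firstWins_swap hxy with h | h
  · refine ⟨0, fun P hP hPB => ?_⟩
    rw [← pairRule_apply (f := f) P]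
    exact hF.eq_peak_of_firstWins hc hnd hx hy hxy h (hP 0) (hP 1) (hPB 0) (hPB 1)
  · refine ⟨1, fun P hP hPB => ?_⟩
    rw [← pairRule_apply (f := f) P]
    exact hF.swap.eq_peak_of_firstWins hc (fun u hu v hv huv => dominates_swap_iff.not.mpr
      (hnd u hu v hv huv)) hy hx hxy.symm h (hP 1) (hP 0) (hPB 1) (hPB 0)

theorem stmt17_union2_general (D : Set (Pref A))
    (f : (Fin 2 → Pref A) → A) (hrule : IsRule D f) (hsp : StrategyProof D f)
    (B : Set A) (hB : 3 ≤ B.ncard)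
    (hc : ((adjGraph D).induce B).Connected) :
    ((∀ z : A, ¬ IsLeafOn (adjGraph D) B z) → DictatorOn D f B) ∧
    ((∃ z : A, IsLeafOn (adjGraph D) B z) →
      (∀ z y : A, IsLeafOn (adjGraph D) B z → y ∈ B → (adjGraph D).Adj z y →
        DictatorOn D f {z, y}) →
      DictatorOn D f B) := by
  have hB' : 1 < B.ncard := by omega
  refine ⟨fun hleaf => ?_, fun _ hpair => ?_⟩
  · exact dictatorOn_of_forall_dominates_exists hrule hsp hB' hc fun u hu v hv huv _ =>
      exists_adj_ne_of_not_isLeafOn (hleaf v) hv hu huv.symm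
  · refine dictatorOn_of_forall_dominates_exists hrule hsp hB' hc fun u hu v hv huv hdom => ?_
    by_cases hleaf : IsLeafOn (adjGraph D) B v
    · have hd := hpair v u hleaf hu huv.symm
      rw [Set.pair_comm] at hd
      exact absurd hdom (not_dominates_of_dictatorOn_pair hd huv)
    · exact exists_adj_ne_of_not_isLeafOn hleaf hv hu huv.symm

/-- Lemma 4: on a connected induced subgraph `G_∼^B` with
`|B| ≥ 3`, (i) no leaf forces dictatorship on `B`; (ii) if there are leaves and
the rule behaves like a dictatorship on each leaf-edge, then it behaves like a
dictatorship on `B`. -/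
theorem stmt17_union2 (D : Set (Pref A)) (hD : D.Nonempty)
    (hcard : 3 ≤ Fintype.card A) (hpc : PathConnectedDom D)
    (f : (Fin 2 → Pref A) → A) (hrule : IsRule D f) (hsp : StrategyProof D f)
    (B : Set A) (hB : 3 ≤ B.ncard)
    (hc : ((adjGraph D).induce B).Connected) :
    ((∀ z : A, ¬ IsLeafOn (adjGraph D) B z) → DictatorOn D f B) ∧
    ((∃ z : A, IsLeafOn (adjGraph D) B z) →
      (∀ z y : A, IsLeafOn (adjGraph D) B z → y ∈ B → (adjGraph D).Adj z y →
        DictatorOn D f {z, y}) →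
      DictatorOn D f B) :=
  stmt17_union2_general D f hrule hsp B hB hc
end

section
/- Fix two voters N = {1, 2}, a domain D and a tops-only, strategy-proof rule f : D^2 → A; by the tops-only property write f(a, b) for the common value of f at any profile where voter 1's peak is a and voter 2's peak is b, and f(P_i, b) (resp. f(a, P_i)) for the value when voter i reports P_i and the other voter's peak is b (resp. a). Let π = (x_1, …, x_v) be a path in the adjacency graph G_∼. Then: (i) f(x_s, x_t) ∈ {x_s, x_{s+1}, …, x_t} and f(x_t, x_s) ∈ {x_s, x_{s+1}, …, x_t} for all 1 ≤ s < t ≤ v; (ii) for each voter i, each P_i ∈ D and each x_s ∈ π, if the value of f when voter i reports P_i and the other voter's peak is x_s equals some x ∉ {x_1, …, x_v}, then the value of f when voter i reports P_i and the other voter's peak is x_k equals x for every k ∈ {1, …, v}; (iii) for each voter i, each P_i ∈ D and each x_s ∈ π, if the value of f when voter i reports P_i and the other voter's peak is x_s equals x_s, then for every p ∈ {1, …, s−1} the value with the other voter's peak x_p lies in {x_p, …, x_s}, and for every q ∈ {s+1, …, v} the value with the other voter's peak x_q lies in {x_s, …, x_q}. -/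
open Classical

set_option linter.unusedSectionVars false
set_option linter.unusedVariables false

variable {A : Type*} [Fintype A] [DecidableEq A] [Nonempty A]

section AuxStmt18

variable {A : Type*} [Fintype A] [DecidableEq A] [Nonempty A]

private lemma fin2_other_ne : ∀ i : Fin 2, (if i = 0 then (1:Fin 2) else 0) ≠ i := by decide

private lemma fin2_tri : ∀ i j k : Fin 2, j ≠ i → k ≠ j → k = i := by decide

lemma prof2_self' (i : Fin 2) (Pi Q : Pref A) : prof2 i Pi Q i = Pi := by
  unfold prof2; exact Function.update_self _ _ _

lemma prof2_other' (i : Fin 2) (Pi Q : Pref A) {j : Fin 2} (h : j ≠ i) :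
    prof2 i Pi Q j = Q := by
  unfold prof2; exact Function.update_of_ne h _ _

lemma prof2_update' (i : Fin 2) (Pi Q Q' : Pref A) {j : Fin 2} (h : j ≠ i) :
    Function.update (prof2 i Pi Q) j Q' = prof2 i Pi Q' := by
  funext k
  by_cases hk : k = j
  · subst hk; rw [Function.update_self, prof2_other' _ _ _ h]
  · have hki : k = i := fin2_tri i j k h hk
    subst hki
    rw [Function.update_of_ne hk, prof2_self', prof2_self']

lemma prof2_indom' (D : Set (Pref A)) (i : Fin 2) {Pi Q : Pref A}
    (hPi : Pi ∈ D) (hQ : Q ∈ D) : InDom D (prof2 i Pi Q) := by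
  intro k
  by_cases hk : k = i
  · subst hk; rw [prof2_self']; exact hPi
  · rw [prof2_other' _ _ _ hk]; exact hQ

lemma prof2_peaks' (i : Fin 2) (Pi Q Q' : Pref A) (h : peak Q = peak Q') :
    ∀ k, peak (prof2 i Pi Q k) = peak (prof2 i Pi Q' k) := by
  intro k
  by_cases hk : k = i
  · subst hk; rw [prof2_self', prof2_self']
  · rw [prof2_other' _ _ _ hk, prof2_other' _ _ _ hk]; exact h

lemma adj_witness' (D : Set (Pref A)) {a b : A} (h : (adjGraph D).Adj a b) :
    ∃ P ∈ D, peak P = a := by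
  rw [adjGraph, SimpleGraph.fromRel_adj] at h
  rcases h.2 with ⟨P, hP, P', hP', h1, _⟩ | ⟨P, hP, P', hP', _, _, h3, _⟩
  · exact ⟨P, hP, h1⟩
  · exact ⟨P', hP', h3⟩

lemma key0' (D : Set (Pref A)) (hcard : 3 ≤ Fintype.card A)
    (f : (Fin 2 → Pref A) → A) (hto : TopsOnly D f) (hsp : StrategyProof D f)
    (i : Fin 2) (Pi : Pref A) (hPi : Pi ∈ D) {a b : A}
    (hadj : DomAdjacent D a b)
    (Qa : Pref A) (hQa : Qa ∈ D) (ha : peak Qa = a)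
    (Qb : Pref A) (hQb : Qb ∈ D) (hb : peak Qb = b) :
    f (prof2 i Pi Qa) = f (prof2 i Pi Qb) ∨
      (f (prof2 i Pi Qa) = a ∧ f (prof2 i Pi Qb) = b) := by
  obtain ⟨Pa, hPa, Pb, hPb, hpa, hsb, hpb, hsa, htail⟩ := hadj
  have h0 : 0 < Fintype.card A := by omega
  have h1 : 1 < Fintype.card A := by omega
  set i0 : Fin (Fintype.card A) := ⟨0, h0⟩ with hi0
  set i1 : Fin (Fintype.card A) := ⟨1, h1⟩ with hi1
  have hPa0 : Pa i0 = a := by simpa [peak, rk, h0, hi0] using hpa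
  have hPa1 : Pa i1 = b := by simpa [second, rk, h1, hi1] using hsb
  have hPb0 : Pb i0 = b := by simpa [peak, rk, h0, hi0] using hpb
  have hPb1 : Pb i1 = a := by simpa [second, rk, h1, hi1] using hsa
  have htail' : ∀ m : Fin (Fintype.card A), 2 ≤ m.val → Pa m = Pb m := by
    intro m hm
    have := htail m.val hm
    simpa [rk, m.isLt] using this
  have hrel : ∀ m, Pb m = Pa (Equiv.swap i0 i1 m) := by
    intro m
    by_cases hm0 : m = i0
    · subst hm0; rw [Equiv.swap_apply_left, hPb0, hPa1]
    by_cases hm1 : m = i1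
    · subst hm1; rw [Equiv.swap_apply_right, hPb1, hPa0]
    · rw [Equiv.swap_apply_of_ne_of_ne hm0 hm1]
      have e0 : m.val ≠ 0 := fun h => hm0 (Fin.ext h)
      have e1 : m.val ≠ 1 := fun h => hm1 (Fin.ext h)
      exact (htail' m (by omega)).symm
  have hsymm : ∀ c, Pb.symm c = Equiv.swap i0 i1 (Pa.symm c) := by
    intro c
    apply Pb.injective
    rw [Equiv.apply_symm_apply, hrel, Equiv.swap_apply_self, Equiv.apply_symm_apply]
  set j : Fin 2 := if i = 0 then 1 else 0 with hj
  have hji : j ≠ i := fin2_other_ne i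
  have domA : InDom D (prof2 i Pi Pa) := prof2_indom' D i hPi hPa
  have domB : InDom D (prof2 i Pi Pb) := prof2_indom' D i hPi hPb
  have hma : f (prof2 i Pi Qa) = f (prof2 i Pi Pa) :=
    hto _ _ (prof2_indom' D i hPi hQa) domA (prof2_peaks' i Pi Qa Pa (ha.trans hpa.symm))
  have hmb : f (prof2 i Pi Qb) = f (prof2 i Pi Pb) :=
    hto _ _ (prof2_indom' D i hPi hQb) domB (prof2_peaks' i Pi Qb Pb (hb.trans hpb.symm))
  have hs1 := hsp (prof2 i Pi Pa) domA j Pb hPb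
  rw [prof2_update' i Pi Pa Pb hji, prof2_other' i Pi Pa hji] at hs1
  have hs2 := hsp (prof2 i Pi Pb) domB j Pa hPa
  rw [prof2_update' i Pi Pb Pa hji, prof2_other' i Pi Pb hji] at hs2
  rcases hs1 with hs1 | hs1
  · left; rw [hma, hmb, hs1]
  rcases hs2 with hs2 | hs2
  · left; rw [hma, hmb, hs2]
  set u := f (prof2 i Pi Pa) with hu
  set w := f (prof2 i Pi Pb) with hw
  unfold prefers at hs1 hs2
  rw [hsymm, hsymm] at hs2
  have hval : ∀ m : Fin (Fintype.card A),
      ((Equiv.swap i0 i1) m).val =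
        if m.val = 0 then 1 else if m.val = 1 then 0 else m.val := by
    intro m
    by_cases hm0 : m = i0
    · subst hm0; rw [Equiv.swap_apply_left]; simp [hi0, hi1]
    by_cases hm1 : m = i1
    · subst hm1; rw [Equiv.swap_apply_right]; simp [hi0, hi1]
    · rw [Equiv.swap_apply_of_ne_of_ne hm0 hm1]
      have e0 : m.val ≠ 0 := fun h => hm0 (Fin.ext h)
      have e1 : m.val ≠ 1 := fun h => hm1 (Fin.ext h)
      simp [e0, e1]
  have hlt1 : (Pa.symm u).val < (Pa.symm w).val := Fin.lt_def.mp hs1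
  have hlt2 : ((Equiv.swap i0 i1) (Pa.symm w)).val <
      ((Equiv.swap i0 i1) (Pa.symm u)).val := Fin.lt_def.mp hs2
  rw [hval, hval] at hlt2
  have hfin : (Pa.symm u).val = 0 ∧ (Pa.symm w).val = 1 := by
    split_ifs at hlt2 <;> omega
  have hueq : Pa.symm u = i0 := Fin.ext hfin.1
  have hweq : Pa.symm w = i1 := Fin.ext hfin.2
  have hua : u = a := by rw [← hPa0, ← hueq, Equiv.apply_symm_apply]
  have hwb : w = b := by rw [← hPa1, ← hweq, Equiv.apply_symm_apply]
  right
  exact ⟨hma.trans hua, hmb.trans hwb⟩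

lemma key' (D : Set (Pref A)) (hcard : 3 ≤ Fintype.card A)
    (f : (Fin 2 → Pref A) → A) (hto : TopsOnly D f) (hsp : StrategyProof D f)
    (i : Fin 2) (Pi : Pref A) (hPi : Pi ∈ D) {a b : A}
    (hab : (adjGraph D).Adj a b)
    (Qa : Pref A) (hQa : Qa ∈ D) (ha : peak Qa = a)
    (Qb : Pref A) (hQb : Qb ∈ D) (hb : peak Qb = b) :
    f (prof2 i Pi Qa) = f (prof2 i Pi Qb) ∨
      (f (prof2 i Pi Qa) = a ∧ f (prof2 i Pi Qb) = b) := by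
  rw [adjGraph, SimpleGraph.fromRel_adj] at hab
  rcases hab.2 with h | h
  · exact key0' D hcard f hto hsp i Pi hPi h Qa hQa ha Qb hQb hb
  · rcases key0' D hcard f hto hsp i Pi hPi h Qb hQb hb Qa hQa ha with h' | h'
    · exact Or.inl h'.symm
    · exact Or.inr ⟨h'.2, h'.1⟩

lemma path_adj' (D : Set (Pref A)) {v : ℕ} {x : Fin v → A}
    (hpath : IsPathIn (adjGraph D) x) (p : Fin v) (h : p.val + 1 < v) :
    (adjGraph D).Adj (x p) (x ⟨p.val + 1, h⟩) := by
  have := hpath.2 p.val h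
  have e : (⟨p.val, Nat.lt_of_succ_lt h⟩ : Fin v) = p := Fin.ext rfl
  rwa [e] at this

end AuxStmt18

section AuxStmt18b

variable {A : Type*} [Fintype A] [DecidableEq A] [Nonempty A]

lemma claimDown' (D : Set (Pref A)) (hcard : 3 ≤ Fintype.card A)
    (f : (Fin 2 → Pref A) → A) (hto : TopsOnly D f) (hsp : StrategyProof D f)
    {v : ℕ} {x : Fin v → A} (hpath : IsPathIn (adjGraph D) x)
    (i : Fin 2) (Pi : Pref A) (hPi : Pi ∈ D) (s : Fin v)
    (Q : Pref A) (hQ : Q ∈ D) (hQs : peak Q = x s) (hfs : f (prof2 i Pi Q) = x s) :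
    ∀ d : ℕ, ∀ p : Fin v, p.val + d = s.val → ∀ Q' ∈ D, peak Q' = x p →
      ∃ k : Fin v, p ≤ k ∧ k ≤ s ∧ f (prof2 i Pi Q') = x k := by
  intro d
  induction d with
  | zero =>
    intro p hp Q' hQ' hQ'p
    have hps : p = s := Fin.ext (by omega)
    subst hps
    refine ⟨p, le_refl _, le_refl _, ?_⟩
    rw [hto (prof2 i Pi Q') (prof2 i Pi Q) (prof2_indom' D i hPi hQ')
        (prof2_indom' D i hPi hQ) (prof2_peaks' i Pi Q' Q (hQ'p.trans hQs.symm))]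
    exact hfs
  | succ d ih =>
    intro p hp Q' hQ' hQ'p
    have hsv := s.isLt
    have hlt : p.val + 1 < v := by omega
    have hadj := path_adj' D hpath p hlt
    obtain ⟨Qp1, hQp1, hQp1p⟩ := adj_witness' D hadj.symm
    obtain ⟨k, hk1, hk2, hk3⟩ :=
      ih ⟨p.val + 1, hlt⟩ (show p.val + 1 + d = s.val by omega) Qp1 hQp1 hQp1p
    rcases key' D hcard f hto hsp i Pi hPi hadj Q' hQ' hQ'p Qp1 hQp1 hQp1p with h | ⟨h1, h2⟩
    · have hk1' : p.val + 1 ≤ k.val := Fin.le_def.mp hk1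
      exact ⟨k, Fin.le_def.mpr (by omega), hk2, h.trans hk3⟩
    · exact ⟨p, le_refl _, Fin.le_def.mpr (by omega), h1⟩

lemma claimUp' (D : Set (Pref A)) (hcard : 3 ≤ Fintype.card A)
    (f : (Fin 2 → Pref A) → A) (hto : TopsOnly D f) (hsp : StrategyProof D f)
    {v : ℕ} {x : Fin v → A} (hpath : IsPathIn (adjGraph D) x)
    (i : Fin 2) (Pi : Pref A) (hPi : Pi ∈ D) (s : Fin v)
    (Q : Pref A) (hQ : Q ∈ D) (hQs : peak Q = x s) (hfs : f (prof2 i Pi Q) = x s) :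
    ∀ d : ℕ, ∀ q : Fin v, s.val + d = q.val → ∀ Q' ∈ D, peak Q' = x q →
      ∃ k : Fin v, s ≤ k ∧ k ≤ q ∧ f (prof2 i Pi Q') = x k := by
  intro d
  induction d with
  | zero =>
    intro q hq Q' hQ' hQ'q
    have hqs : q = s := Fin.ext (by omega)
    subst hqs
    refine ⟨q, le_refl _, le_refl _, ?_⟩
    rw [hto (prof2 i Pi Q') (prof2 i Pi Q) (prof2_indom' D i hPi hQ')
        (prof2_indom' D i hPi hQ) (prof2_peaks' i Pi Q' Q (hQ'q.trans hQs.symm))]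
    exact hfs
  | succ d ih =>
    intro q hq Q' hQ' hQ'q
    have hqv := q.isLt
    have hlt : q.val - 1 + 1 < v := by omega
    have hadj := path_adj' D hpath ⟨q.val - 1, Nat.lt_of_succ_lt hlt⟩ hlt
    have he : (⟨q.val - 1 + 1, hlt⟩ : Fin v) = q := Fin.ext (show q.val - 1 + 1 = q.val by omega)
    rw [he] at hadj
    obtain ⟨Qq0, hQq0, hQq0p⟩ := adj_witness' D hadj
    obtain ⟨k, hk1, hk2, hk3⟩ :=
      ih ⟨q.val - 1, Nat.lt_of_succ_lt hlt⟩ (show s.val + d = q.val - 1 by omega) Qq0 hQq0 hQq0p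
    rcases key' D hcard f hto hsp i Pi hPi hadj Qq0 hQq0 hQq0p Q' hQ' hQ'q with h | ⟨h1, h2⟩
    · have hk2' : k.val ≤ q.val - 1 := Fin.le_def.mp hk2
      exact ⟨k, hk1, Fin.le_def.mpr (by omega), h.symm.trans hk3⟩
    · exact ⟨q, Fin.le_def.mpr (by omega), le_refl _, h2⟩

lemma claimConst' (D : Set (Pref A)) (hcard : 3 ≤ Fintype.card A)
    (f : (Fin 2 → Pref A) → A) (hto : TopsOnly D f) (hsp : StrategyProof D f)
    {v : ℕ} {x : Fin v → A} (hpath : IsPathIn (adjGraph D) x)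
    (i : Fin 2) (Pi : Pref A) (hPi : Pi ∈ D) (s : Fin v)
    (Q : Pref A) (hQ : Q ∈ D) (hQs : peak Q = x s)
    (hnot : f (prof2 i Pi Q) ∉ Set.range x) :
    ∀ d : ℕ, ∀ k : Fin v, (k.val + d = s.val ∨ s.val + d = k.val) →
      ∀ Q' ∈ D, peak Q' = x k → f (prof2 i Pi Q') = f (prof2 i Pi Q) := by
  intro d
  induction d with
  | zero =>
    intro k hk Q' hQ' hQ'k
    have hks : k = s := Fin.ext (by omega)
    subst hks
    exact hto _ _ (prof2_indom' D i hPi hQ') (prof2_indom' D i hPi hQ)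
      (prof2_peaks' i Pi Q' Q (hQ'k.trans hQs.symm))
  | succ d ih =>
    intro k hk Q' hQ' hQ'k
    have hsv := s.isLt
    have hkv := k.isLt
    rcases hk with hk | hk
    · have hlt : k.val + 1 < v := by omega
      have hadj := path_adj' D hpath k hlt
      obtain ⟨Qk1, hQk1, hQk1p⟩ := adj_witness' D hadj.symm
      have hih := ih ⟨k.val + 1, hlt⟩ (Or.inl (show k.val + 1 + d = s.val by omega))
        Qk1 hQk1 hQk1p
      rcases key' D hcard f hto hsp i Pi hPi hadj Q' hQ' hQ'k Qk1 hQk1 hQk1p with h | ⟨h1, h2⟩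
      · exact h.trans hih
      · exact absurd ⟨⟨k.val + 1, hlt⟩, (hih.symm.trans h2).symm⟩ hnot
    · have hlt : k.val - 1 + 1 < v := by omega
      have hadj := path_adj' D hpath ⟨k.val - 1, Nat.lt_of_succ_lt hlt⟩ hlt
      have he : (⟨k.val - 1 + 1, hlt⟩ : Fin v) = k :=
        Fin.ext (show k.val - 1 + 1 = k.val by omega)
      rw [he] at hadj
      obtain ⟨Qk0, hQk0, hQk0p⟩ := adj_witness' D hadj
      have hih := ih ⟨k.val - 1, Nat.lt_of_succ_lt hlt⟩
        (Or.inr (show s.val + d = k.val - 1 by omega)) Qk0 hQk0 hQk0p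
      rcases key' D hcard f hto hsp i Pi hPi hadj Qk0 hQk0 hQk0p Q' hQ' hQ'k with h | ⟨h1, h2⟩
      · exact h.symm.trans hih
      · exact absurd ⟨⟨k.val - 1, Nat.lt_of_succ_lt hlt⟩, (hih.symm.trans h1).symm⟩ hnot

end AuxStmt18b

/-- Lemma 5: behavior of a two-voter, tops-only, strategy-proof
rule along a path of the adjacency graph. -/
theorem stmt18_transitivity (D : Set (Pref A)) (hD : D.Nonempty)
    (hcard : 3 ≤ Fintype.card A)
    (f : (Fin 2 → Pref A) → A) (hrule : IsRule D f) (hto : TopsOnly D f)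
    (hsp : StrategyProof D f)
    (v : ℕ) (x : Fin v → A) (hpath : IsPathIn (adjGraph D) x) :
    (∀ s t : Fin v, s < t →
      (∀ P1 ∈ D, ∀ P2 ∈ D, peak P1 = x s → peak P2 = x t →
        ∃ k : Fin v, s ≤ k ∧ k ≤ t ∧ f ![P1, P2] = x k) ∧
      (∀ P1 ∈ D, ∀ P2 ∈ D, peak P1 = x t → peak P2 = x s →
        ∃ k : Fin v, s ≤ k ∧ k ≤ t ∧ f ![P1, P2] = x k)) ∧
    (∀ i : Fin 2, ∀ Pi ∈ D, ∀ s : Fin v, ∀ Q ∈ D, peak Q = x s →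
      f (prof2 i Pi Q) ∉ Set.range x →
      ∀ k : Fin v, ∀ Q' ∈ D, peak Q' = x k →
        f (prof2 i Pi Q') = f (prof2 i Pi Q)) ∧
    (∀ i : Fin 2, ∀ Pi ∈ D, ∀ s : Fin v, ∀ Q ∈ D, peak Q = x s →
      f (prof2 i Pi Q) = x s →
      (∀ p : Fin v, p < s → ∀ Q' ∈ D, peak Q' = x p →
        ∃ k : Fin v, p ≤ k ∧ k ≤ s ∧ f (prof2 i Pi Q') = x k) ∧
      (∀ q : Fin v, s < q → ∀ Q' ∈ D, peak Q' = x q →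
        ∃ k : Fin v, s ≤ k ∧ k ≤ q ∧ f (prof2 i Pi Q') = x k)) := by
  have hfin2 : ∀ m : Fin 2, m = 0 ∨ m = 1 := by decide
  have hmat1 : ∀ P1 P2 : Pref A, (![P1, P2] : Fin 2 → Pref A) = prof2 1 P2 P1 := by
    intro P1 P2
    funext m
    rcases hfin2 m with rfl | rfl
    · rw [prof2_other' 1 P2 P1 (show (0:Fin 2) ≠ 1 by decide)]; rfl
    · rw [prof2_self']; rfl
  have hmat0 : ∀ P1 P2 : Pref A, (![P1, P2] : Fin 2 → Pref A) = prof2 0 P1 P2 := by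
    intro P1 P2
    funext m
    rcases hfin2 m with rfl | rfl
    · rw [prof2_self']; rfl
    · rw [prof2_other' 0 P1 P2 (show (1:Fin 2) ≠ 0 by decide)]; rfl
  refine ⟨?_, ?_, ?_⟩
  · intro s t hst
    have hstv : s.val < t.val := Fin.lt_def.mp hst
    have htv := t.isLt
    -- a witness preference with peak x t
    have hlt : t.val - 1 + 1 < v := by omega
    have hadj := path_adj' D hpath ⟨t.val - 1, Nat.lt_of_succ_lt hlt⟩ hlt
    have he : (⟨t.val - 1 + 1, hlt⟩ : Fin v) = t := Fin.ext (show t.val - 1 + 1 = t.val by omega)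
    rw [he] at hadj
    obtain ⟨Qt, hQt, hQtp⟩ := adj_witness' D hadj.symm
    constructor
    · intro P1 hP1 P2 hP2 h1 h2
      have huna : f (prof2 1 P2 Qt) = x t := by
        apply hrule _ (prof2_indom' D 1 hP2 hQt) (x t)
        intro m
        by_cases hm : m = (1 : Fin 2)
        · subst hm; rw [prof2_self']; exact h2
        · rw [prof2_other' _ _ _ hm]; exact hQtp
      obtain ⟨k, hk1, hk2, hk3⟩ := claimDown' D hcard f hto hsp hpath 1 P2 hP2 t Qt hQt hQtp
        huna (t.val - s.val) s (by omega) P1 hP1 h1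
      exact ⟨k, hk1, hk2, by rw [hmat1 P1 P2]; exact hk3⟩
    · intro P1 hP1 P2 hP2 h1 h2
      have huna : f (prof2 0 P1 Qt) = x t := by
        apply hrule _ (prof2_indom' D 0 hP1 hQt) (x t)
        intro m
        by_cases hm : m = (0 : Fin 2)
        · subst hm; rw [prof2_self']; exact h1
        · rw [prof2_other' _ _ _ hm]; exact hQtp
      obtain ⟨k, hk1, hk2, hk3⟩ := claimDown' D hcard f hto hsp hpath 0 P1 hP1 t Qt hQt hQtp
        huna (t.val - s.val) s (by omega) P2 hP2 h2
      exact ⟨k, hk1, hk2, by rw [hmat0 P1 P2]; exact hk3⟩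
  · intro i Pi hPi s Q hQ hQs hnot k Q' hQ' hQ'k
    rcases le_or_gt k.val s.val with h | h
    · exact claimConst' D hcard f hto hsp hpath i Pi hPi s Q hQ hQs hnot
        (s.val - k.val) k (Or.inl (by omega)) Q' hQ' hQ'k
    · exact claimConst' D hcard f hto hsp hpath i Pi hPi s Q hQ hQs hnot
        (k.val - s.val) k (Or.inr (by omega)) Q' hQ' hQ'k
  · intro i Pi hPi s Q hQ hQs hfs
    constructor
    · intro p hps Q' hQ' hQ'p
      have hps' : p.val < s.val := Fin.lt_def.mp hps
      exact claimDown' D hcard f hto hsp hpath i Pi hPi s Q hQ hQs hfs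
        (s.val - p.val) p (by omega) Q' hQ' hQ'p
    · intro q hsq Q' hQ' hQ'q
      have hsq' : s.val < q.val := Fin.lt_def.mp hsq
      exact claimUp' D hcard f hto hsp hpath i Pi hPi s Q hQ hQs hfs
        (q.val - s.val) q (by omega) Q' hQ' hQ'q
end
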